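/- arXiv:2504.16195 — 2 statements merged into one kernel-verified Lean document; each statement's English description precedes it below -/
import Mathlib

section
/- Let A ⊆ ℂ be the round annulus {z : r < |z| < R} and suppose A embeds conformally and essentially (inducing an isomorphism on fundamental groups) into the complex torus ℂ/(Λℤ + 2πiℤ) with homotopy class of the core curve corresponding to the lattice element Λ. Then the modulus of A satisfies mod(A) = (1/2π)·log(R/r) ≤ Re(Λ)·2π/|Λ|² ÷ (1) , i.e. mod(A) ≤ 2π·Re(1/Λ). (Bers inequality for annuli in tori.) -/
open Real Complex MeasureTheory Set Pointwise

lemma bers_det_aux (c : ℂ) :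
    ((ContinuousLinearMap.smulRight (1 : ℂ →L[ℂ] ℂ) c).restrictScalars ℝ).det
      = Complex.normSq c := by
  have h : (((ContinuousLinearMap.smulRight (1 : ℂ →L[ℂ] ℂ) c).restrictScalars ℝ) :
      ℂ →ₗ[ℝ] ℂ) = Algebra.lmul ℝ ℂ c := by
    apply LinearMap.ext
    intro z
    simp [mul_comm, smul_eq_mul]
  show LinearMap.det _ = _
  rw [h, ← Algebra.norm_apply, Algebra.norm_complex_apply]

lemma bers_cs {L : ℝ} (hL : 0 < L) {g : ℝ → ℝ}
    (hg : IntervalIntegrable g volume 0 L)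
    (hg2 : IntervalIntegrable (fun y => g y ^ 2) volume 0 L) :
    (∫ y in (0:ℝ)..L, g y) ^ 2 ≤ L * ∫ y in (0:ℝ)..L, g y ^ 2 := by
  set c : ℝ := (∫ y in (0:ℝ)..L, g y) / L with hc
  have h0 : 0 ≤ ∫ y in (0:ℝ)..L, (g y - c) ^ 2 :=
    intervalIntegral.integral_nonneg hL.le fun y _ => sq_nonneg _
  have hexp : ∫ y in (0:ℝ)..L, (g y - c) ^ 2
      = (∫ y in (0:ℝ)..L, g y ^ 2) - 2 * c * (∫ y in (0:ℝ)..L, g y) + L * c ^ 2 := by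
    have h1 : ∀ y : ℝ, (g y - c) ^ 2 = g y ^ 2 - 2 * c * g y + c ^ 2 := fun y => by ring
    rw [intervalIntegral.integral_congr (fun y _ => h1 y)]
    rw [intervalIntegral.integral_add (hg2.sub (hg.const_mul (2 * c)))
      intervalIntegrable_const,
      intervalIntegral.integral_sub hg2 (hg.const_mul (2 * c)),
      intervalIntegral.integral_const_mul, intervalIntegral.integral_const]
    simp [smul_eq_mul]
  rw [hexp] at h0
  set A := ∫ y in (0:ℝ)..L, g y with hA
  set B := ∫ y in (0:ℝ)..L, g y ^ 2 with hB
  have e : B - 2 * c * A + L * c ^ 2 = B - A ^ 2 / L := by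
    rw [hc]; field_simp; ring
  rw [e, sub_nonneg, div_le_iff₀ hL] at h0
  linarith [h0]

lemma bers_basis (Λ : ℂ) (hΛ : 0 < Λ.re) :
    ∃ b : Module.Basis (Fin 2) ℝ ℂ, b 0 = Λ ∧ b 1 = 2 * Real.pi * Complex.I := by
  set M : ℂ →ₗ[ℝ] ℂ :=
    Complex.reLm.smulRight Λ + Complex.imLm.smulRight (2 * Real.pi * Complex.I) with hM
  have hMval : ∀ z : ℂ, M z = z.re • Λ + z.im • (2 * Real.pi * Complex.I) := fun z => rfl
  have hinj : Function.Injective M := by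
    intro z₁ z₂ h
    have h0 : M (z₁ - z₂) = 0 := by rw [map_sub, h, sub_self]
    set z := z₁ - z₂ with hz
    rw [hMval] at h0
    have hre : z.re * Λ.re = 0 := by
      have := congrArg Complex.re h0
      simpa [Complex.smul_re, Complex.smul_im] using this
    have hre0 : z.re = 0 := by
      rcases mul_eq_zero.mp hre with h' | h'
      · exact h'
      · exact absurd h' hΛ.ne'
    have him : z.im * (2 * Real.pi) = 0 := by
      have := congrArg Complex.im h0
      simpa [Complex.smul_re, Complex.smul_im, hre0] using this
    have him0 : z.im = 0 := by
      rcases mul_eq_zero.mp him with h' | h'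
      · exact h'
      · nlinarith [Real.pi_pos]
    have : z = 0 := Complex.ext hre0 him0
    exact sub_eq_zero.mp (hz ▸ this)
  have hsurj : Function.Surjective M := (LinearMap.injective_iff_surjective).mp hinj
  let e := LinearEquiv.ofBijective M ⟨hinj, hsurj⟩
  refine ⟨Complex.basisOneI.map e, ?_, ?_⟩
  · show e (Complex.basisOneI 0) = Λ
    simp only [Complex.coe_basisOneI, Matrix.cons_val_zero]
    show M 1 = Λ
    simp [hMval]
  · show e (Complex.basisOneI 1) = 2 * Real.pi * Complex.I
    simp only [Complex.coe_basisOneI, Matrix.cons_val_one, Matrix.head_cons]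
    show M Complex.I = 2 * Real.pi * Complex.I
    simp [hMval]

lemma bers_vol_one : volume (ZSpan.fundamentalDomain Complex.basisOneI) = 1 := by
  have hset : ZSpan.fundamentalDomain Complex.basisOneI
      = Complex.measurableEquivRealProd ⁻¹' (Set.Ico 0 1 ×ˢ Set.Ico 0 1) := by
    ext z
    simp only [ZSpan.fundamentalDomain, Set.mem_setOf_eq, Set.mem_preimage,
      Complex.measurableEquivRealProd_apply, Set.mem_prod, Fin.forall_fin_two]
    rw [show ∀ i, (Complex.basisOneI.repr z) i = ![z.re, z.im] i from fun i => by
      rw [Complex.coe_basisOneI_repr]]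
    simp
  rw [hset, Complex.volume_preserving_equiv_real_prod.measure_preimage
    ((measurableSet_Ico.prod measurableSet_Ico).nullMeasurableSet)]
  rw [MeasureTheory.Measure.volume_eq_prod, MeasureTheory.Measure.prod_prod,
    Real.volume_Ico]
  simp

lemma bers_covolume {Λ : ℂ} (hΛ : 0 < Λ.re) (b : Module.Basis (Fin 2) ℝ ℂ)
    (h0 : b 0 = Λ) (h1 : b 1 = 2 * Real.pi * Complex.I) :
    volume (ZSpan.fundamentalDomain b) = ENNReal.ofReal (2 * Real.pi * Λ.re) := by
  rw [ZSpan.measure_fundamentalDomain b volume Complex.basisOneI, bers_vol_one, mul_one]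
  congr 1
  have hmat : Complex.basisOneI.toMatrix b = !![Λ.re, 0; Λ.im, 2 * Real.pi] := by
    ext i j
    rw [Module.Basis.toMatrix_apply]
    fin_cases i <;> fin_cases j <;>
      simp [h0, h1, Complex.coe_basisOneI_repr]
  rw [Module.Basis.det_apply, hmat, Matrix.det_fin_two_of]
  rw [abs_of_pos (by nlinarith [Real.pi_pos])]
  ring

lemma bers_packing {Λ : ℂ} (hΛ : 0 < Λ.re) (T : Set ℂ) (hT : MeasurableSet T)
    (hdis : ∀ ξ : ℂ, (∃ m n : ℤ, ξ = m * Λ + n * (2 * Real.pi * Complex.I)) → ξ ≠ 0 →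
      Disjoint T ((ξ + ·) '' T)) :
    volume T ≤ ENNReal.ofReal (2 * Real.pi * Λ.re) := by
  obtain ⟨b, hb0, hb1⟩ := bers_basis Λ hΛ
  set L := (Submodule.span ℤ (Set.range b)).toAddSubgroup with hLdef
  have hmem : ∀ ξ : ℂ, ξ ∈ L → ∃ m n : ℤ, ξ = m * Λ + n * (2 * Real.pi * Complex.I) := by
    intro ξ hξ
    obtain ⟨c, hc⟩ := (Submodule.mem_span_range_iff_exists_fun ℤ).mp hξ
    refine ⟨c 0, c 1, ?_⟩
    rw [← hc, Fin.sum_univ_two, hb0, hb1]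
    simp [zsmul_eq_mul]
  have hcount : Countable L := by
    have hsurj : Function.Surjective
        (fun c : Fin 2 → ℤ => (⟨∑ i, c i • b i,
          (Submodule.mem_span_range_iff_exists_fun ℤ).mpr ⟨c, rfl⟩⟩ : L)) := by
      rintro ⟨ξ, hξ⟩
      obtain ⟨c, hc⟩ := (Submodule.mem_span_range_iff_exists_fun ℤ).mp hξ
      exact ⟨c, Subtype.ext hc⟩
    exact hsurj.countable
  have hFD := ZSpan.isAddFundamentalDomain' b volume
  set D := ZSpan.fundamentalDomain b with hD
  have key := hFD.measure_eq_tsum T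
  have hcoe : ∀ (g : L) (s : Set ℂ), g +ᵥ s = ((g : ℂ) + ·) '' s := by
    intro g s
    ext z
    constructor
    · rintro ⟨y, hy, rfl⟩
      exact ⟨y, hy, rfl⟩
    · rintro ⟨y, hy, rfl⟩
      exact ⟨y, hy, rfl⟩
  have hmeasA : ∀ g : L, MeasurableSet ((g +ᵥ T) ∩ D) := by
    intro g
    refine MeasurableSet.inter ?_ (ZSpan.fundamentalDomain_measurableSet b)
    rw [hcoe]
    have : ((g : ℂ) + ·) '' T = (g : ℂ) +ᵥ T := by
      ext z
      constructor
      · rintro ⟨y, hy, rfl⟩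
        exact ⟨y, hy, rfl⟩
      · rintro ⟨y, hy, rfl⟩
        exact ⟨y, hy, rfl⟩
    rw [this]
    exact hT.const_vadd _
  have hpw : Pairwise (Function.onFun Disjoint (fun g : L => (g +ᵥ T) ∩ D)) := by
    intro g g' hgg'
    refine Set.disjoint_left.mpr ?_
    rintro z ⟨hz1, -⟩ ⟨hz2, -⟩
    rw [hcoe] at hz1 hz2
    obtain ⟨t₁, ht₁, hzt₁⟩ := hz1
    obtain ⟨t₂, ht₂, hzt₂⟩ := hz2
    have hξmem : ((g : ℂ) - (g' : ℂ)) ∈ L := by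
      exact sub_mem g.2 g'.2
    have hξne : ((g : ℂ) - (g' : ℂ)) ≠ 0 := by
      intro h
      exact hgg' (Subtype.ext (sub_eq_zero.mp h))
    have h12 : (g : ℂ) + t₁ = (g' : ℂ) + t₂ := hzt₁.trans hzt₂.symm
    have ht₂' : t₂ = ((g : ℂ) - (g' : ℂ)) + t₁ := by
      linear_combination -h12
    exact Set.disjoint_left.mp (hdis _ (hmem _ hξmem) hξne) ht₂
      ⟨t₁, ht₁, ht₂'.symm⟩
  calc volume T = ∑' g : L, volume ((g +ᵥ T) ∩ D) := key
    _ = volume (⋃ g : L, ((g +ᵥ T) ∩ D)) := (measure_iUnion hpw hmeasA).symm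
    _ ≤ volume D := measure_mono (Set.iUnion_subset fun g => Set.inter_subset_right)
    _ = ENNReal.ofReal (2 * Real.pi * Λ.re) := bers_covolume hΛ b hb0 hb1

lemma bers_vertical (Λ : ℂ) {a b : ℝ} (F : ℂ → ℂ)
    (hderiv : ∀ w : ℂ, a < w.re → w.re < b → HasDerivAt F (deriv F w) w)
    (hdc : ContinuousOn (deriv F) {w : ℂ | a < w.re ∧ w.re < b})
    (hper : ∀ w : ℂ, a < w.re → w.re < b →
      F (w + 2 * Real.pi * Complex.I) = F w + Λ)
    {x : ℝ} (hax : a < x) (hxb : x < b) :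
    Complex.normSq Λ ≤ (2 * Real.pi) *
      ∫ y in (0:ℝ)..(2 * Real.pi), Complex.normSq (deriv F ((x:ℂ) + y * Complex.I)) := by
  have h2pi : (0:ℝ) < 2 * Real.pi := by positivity
  have hmem : ∀ y : ℝ, a < ((x:ℂ) + y * Complex.I).re ∧ ((x:ℂ) + y * Complex.I).re < b := by
    intro y
    simp only [Complex.add_re, Complex.ofReal_re, Complex.mul_re, Complex.I_re,
      Complex.ofReal_im, Complex.I_im, mul_zero, mul_one, zero_sub]
    constructor <;> simp <;> linarith
  have hline : ∀ y : ℝ, HasDerivAt (fun t : ℝ => F ((x:ℂ) + t * Complex.I))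
      (Complex.I * deriv F ((x:ℂ) + y * Complex.I)) y := by
    intro y
    have h1 : HasDerivAt (fun t : ℝ => (x:ℂ) + (t:ℂ) * Complex.I) Complex.I y := by
      have := ((Complex.ofRealCLM.hasDerivAt (x := y)).mul_const Complex.I).const_add (x:ℂ)
      simpa using this
    have h2 := ((hderiv _ (hmem y).1 (hmem y).2).hasFDerivAt.restrictScalars
      ℝ).comp_hasDerivAt y h1
    simp [smul_eq_mul] at h2
    exact h2
  have hlc : Continuous (fun y : ℝ => (x:ℂ) + (y:ℂ) * Complex.I) := by continuity
  have hcont1 : ContinuousOn (fun y : ℝ => deriv F ((x:ℂ) + y * Complex.I))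
      (Set.uIcc 0 (2 * Real.pi)) := by
    exact (hdc.comp hlc.continuousOn (fun y _ => hmem y))
  have hFTC := intervalIntegral.integral_eq_sub_of_hasDerivAt
    (f := fun t : ℝ => F ((x:ℂ) + t * Complex.I))
    (f' := fun y => Complex.I * deriv F ((x:ℂ) + y * Complex.I))
    (fun y _ => hline y) ((continuousOn_const.mul hcont1).intervalIntegrable)
  have hend : F ((x:ℂ) + ((2 * Real.pi : ℝ):ℂ) * Complex.I) = F (x:ℂ) + Λ := by
    have h := hper (x:ℂ) (by simpa using hax) (by simpa using hxb)
    rw [← h]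
    norm_num
  have hΛeq : Λ = ∫ y in (0:ℝ)..(2 * Real.pi),
      Complex.I * deriv F ((x:ℂ) + y * Complex.I) := by
    rw [hFTC]
    push_cast at hend ⊢
    rw [hend]
    simp
  have habs : ‖Λ‖ ≤ ∫ y in (0:ℝ)..(2 * Real.pi),
      ‖deriv F ((x:ℂ) + y * Complex.I)‖ := by
    rw [hΛeq]
    calc ‖∫ y in (0:ℝ)..(2 * Real.pi),
          Complex.I * deriv F ((x:ℂ) + y * Complex.I)‖
        ≤ ∫ y in (0:ℝ)..(2 * Real.pi), ‖Complex.I * deriv F ((x:ℂ) + y * Complex.I)‖ := by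
          simpa using
            intervalIntegral.norm_integral_le_integral_norm
              (f := fun y : ℝ => Complex.I * deriv F ((x:ℂ) + y * Complex.I)) h2pi.le
      _ = ∫ y in (0:ℝ)..(2 * Real.pi), ‖deriv F ((x:ℂ) + y * Complex.I)‖ := by
          apply intervalIntegral.integral_congr
          intro y _
          simp
  have hgint : IntervalIntegrable (fun y : ℝ => ‖deriv F ((x:ℂ) + y * Complex.I)‖)
      volume 0 (2 * Real.pi) :=
    (continuous_norm.comp_continuousOn hcont1).intervalIntegrable
  have hg2int : IntervalIntegrable
      (fun y : ℝ => ‖deriv F ((x:ℂ) + y * Complex.I)‖ ^ 2)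
      volume 0 (2 * Real.pi) := by
    have := (continuous_norm.comp_continuousOn hcont1)
    exact (this.pow 2).intervalIntegrable
  have hcs := bers_cs h2pi hgint hg2int
  have h1 : Complex.normSq Λ = ‖Λ‖ ^ 2 := (Complex.sq_norm Λ).symm
  have h2 : ‖Λ‖ ^ 2 ≤ (∫ y in (0:ℝ)..(2 * Real.pi),
      ‖deriv F ((x:ℂ) + y * Complex.I)‖) ^ 2 := by
    apply pow_le_pow_left₀ (norm_nonneg Λ) habs
  have h3 : (∫ y in (0:ℝ)..(2 * Real.pi), ‖deriv F ((x:ℂ) + y * Complex.I)‖ ^ 2)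
      = ∫ y in (0:ℝ)..(2 * Real.pi), Complex.normSq (deriv F ((x:ℂ) + y * Complex.I)) := by
    apply intervalIntegral.integral_congr
    intro y _
    exact Complex.sq_norm _
  rw [h1]
  calc ‖Λ‖ ^ 2 ≤ _ := h2
    _ ≤ (2 * Real.pi) * ∫ y in (0:ℝ)..(2 * Real.pi),
        ‖deriv F ((x:ℂ) + y * Complex.I)‖ ^ 2 := hcs
    _ = _ := by rw [h3]

/-- Bers inequality: if the round annulus `{r < |z| < R}` embeds conformally and essentially
into the torus `ℂ/(Λℤ + 2πiℤ)` in the homotopy class of `Λ`, then its modulus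
`(1/2π)·log(R/r)` is at most `2π·Re(1/Λ)`.  The embedding is expressed through a lift
`F` on the strip `{log r < Re w < log R}` (the universal cover of the annulus via `exp`),
equivariant for the deck transformation `w ↦ w + 2πi` acting by `Λ`, and injective modulo
the lattice. -/
theorem stmt10 (Λ : ℂ) (hΛ : 0 < Λ.re) (r R : ℝ) (hr : 0 < r) (hrR : r < R)
    (F : ℂ → ℂ)
    (hF : DifferentiableOn ℂ F {w : ℂ | Real.log r < w.re ∧ w.re < Real.log R})
    (hper : ∀ w : ℂ, Real.log r < w.re → w.re < Real.log R →
      F (w + 2 * Real.pi * Complex.I) = F w + Λ)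
    (hinj : ∀ w₁ ∈ {w : ℂ | Real.log r < w.re ∧ w.re < Real.log R},
      ∀ w₂ ∈ {w : ℂ | Real.log r < w.re ∧ w.re < Real.log R},
      (∃ m n : ℤ, F w₁ - F w₂ = (m : ℂ) * Λ + (n : ℂ) * (2 * Real.pi * Complex.I)) →
      ∃ n : ℤ, w₁ - w₂ = (n : ℂ) * (2 * Real.pi * Complex.I)) :
    Real.log (R / r) / (2 * Real.pi) ≤ 2 * Real.pi * (Λ⁻¹).re := by
  have hpi : (0:ℝ) < 2 * Real.pi := by positivity
  have hΛ0 : Λ ≠ 0 := fun h => by simp [h] at hΛ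
  have hnsq : 0 < Complex.normSq Λ := Complex.normSq_pos.mpr hΛ0
  set a := Real.log r with ha
  set b := Real.log R with hb
  have hab : a < b := Real.log_lt_log hr hrR
  have hUopen : IsOpen {w : ℂ | a < w.re ∧ w.re < b} := by
    have : {w : ℂ | a < w.re ∧ w.re < b} = Complex.re ⁻¹' (Set.Ioo a b) := rfl
    rw [this]; exact isOpen_Ioo.preimage Complex.continuous_re
  have hderiv : ∀ w : ℂ, a < w.re → w.re < b → HasDerivAt F (deriv F w) w := fun w h1 h2 =>
    (hF.differentiableAt (hUopen.mem_nhds ⟨h1, h2⟩)).hasDerivAt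
  have hdc : ContinuousOn (deriv F) {w : ℂ | a < w.re ∧ w.re < b} :=
    ((hF.analyticOnNhd hUopen).deriv).continuousOn
  -- main estimate on substrips
  have main : ∀ a' b' : ℝ, a < a' → a' < b' → b' < b →
      (b' - a') * Complex.normSq Λ ≤ (2 * Real.pi) * (2 * Real.pi * Λ.re) := by
    intro a' b' haa hab' hbb
    set S : Set ℂ :=
      Complex.measurableEquivRealProd ⁻¹' (Set.Ioo a' b' ×ˢ Set.Ico 0 (2 * Real.pi)) with hS
    have hSmem : ∀ z : ℂ, z ∈ S ↔ (a' < z.re ∧ z.re < b') ∧ (0 ≤ z.im ∧ z.im < 2 * Real.pi) := by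
      intro z
      simp [hS, Complex.measurableEquivRealProd_apply, Set.mem_preimage, Set.mem_prod]
    have hSmeas : MeasurableSet S :=
      Complex.measurableEquivRealProd.measurable (measurableSet_Ioo.prod measurableSet_Ico)
    have hSU : ∀ z ∈ S, a < z.re ∧ z.re < b := fun z hz =>
      ⟨lt_trans haa ((hSmem z).mp hz).1.1, lt_trans ((hSmem z).mp hz).1.2 hbb⟩
    -- injectivity of F on S
    have hzero : ∀ w₁ w₂ : ℂ, w₁ ∈ S → w₂ ∈ S →
        (∃ n : ℤ, w₁ - w₂ = (n : ℂ) * (2 * Real.pi * Complex.I)) → w₁ = w₂ := by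
      intro w₁ w₂ h1 h2 ⟨n, hn⟩
      have him : w₁.im - w₂.im = n * (2 * Real.pi) := by
        have := congrArg Complex.im hn
        simpa using this
      have hb1 := ((hSmem w₁).mp h1).2
      have hb2 := ((hSmem w₂).mp h2).2
      have hn0 : n = 0 := by
        by_contra hne
        have h1n : (1:ℝ) ≤ |(n:ℝ)| := by
          exact_mod_cast Int.one_le_abs (by exact_mod_cast hne)
        have habs : |w₁.im - w₂.im| < 2 * Real.pi := by
          rw [abs_sub_lt_iff]; constructor <;> linarith
        rw [him, abs_mul] at habs
        have : |(2 * Real.pi : ℝ)| = 2 * Real.pi := abs_of_pos hpi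
        rw [this] at habs
        nlinarith
      rw [hn0] at hn
      simp at hn
      exact sub_eq_zero.mp hn
    have hinjS : Set.InjOn F S := by
      intro w₁ h1 w₂ h2 heq
      refine hzero w₁ w₂ h1 h2 ?_
      exact hinj w₁ (hSU _ h1) w₂ (hSU _ h2) ⟨0, 0, by rw [heq]; simp⟩
    -- change of variables
    have hfd : ∀ w ∈ S, HasFDerivWithinAt F
        ((ContinuousLinearMap.smulRight (1 : ℂ →L[ℂ] ℂ) (deriv F w)).restrictScalars ℝ) S w :=
      fun w hw => (((hderiv w (hSU w hw).1 (hSU w hw).2).hasFDerivAt).restrictScalars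
        ℝ).hasFDerivWithinAt
    have hchange := lintegral_abs_det_fderiv_eq_addHaar_image volume hSmeas hfd hinjS
    have hdetv : ∀ w : ℂ, ENNReal.ofReal
        |((ContinuousLinearMap.smulRight (1 : ℂ →L[ℂ] ℂ) (deriv F w)).restrictScalars ℝ).det|
        = ENNReal.ofReal (Complex.normSq (deriv F w)) := by
      intro w
      rw [bers_det_aux, _root_.abs_of_nonneg (Complex.normSq_nonneg _)]
    rw [lintegral_congr hdetv] at hchange
    -- packing
    have hpack : volume (F '' S) ≤ ENNReal.ofReal (2 * Real.pi * Λ.re) := by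
      refine bers_packing hΛ (F '' S)
        (hSmeas.image_of_continuousOn_injOn (hF.continuousOn.mono
          (fun z hz => hSU z hz)) hinjS) ?_
      intro ξ hξrep hξ0
      rw [Set.disjoint_left]
      rintro z ⟨w₂, hw₂S, rfl⟩ ⟨z₁, ⟨w₁, hw₁S, rfl⟩, hz⟩
      obtain ⟨m, n, hmn⟩ := hξrep
      have hdiff : F w₂ - F w₁ = (m : ℂ) * Λ + (n : ℂ) * (2 * Real.pi * Complex.I) := by
        rw [← hmn]; linear_combination -hz
      have := hzero w₂ w₁ hw₂S hw₁S (hinj w₂ (hSU _ hw₂S) w₁ (hSU _ hw₁S) ⟨m, n, hdiff⟩)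
      rw [this] at hdiff
      simp at hdiff
      rw [← hmn] at hdiff
      exact hξ0 hdiff.symm
    -- lower bound via Fubini
    have hprod : ∫⁻ w in S, ENNReal.ofReal (Complex.normSq (deriv F w)) ∂volume
        = ∫⁻ p in Set.Ioo a' b' ×ˢ Set.Ico 0 (2 * Real.pi),
            ENNReal.ofReal (Complex.normSq (deriv F (Complex.measurableEquivRealProd.symm p)))
            ∂(volume : Measure (ℝ × ℝ)) := by
      rw [hS]
      rw [← Complex.volume_preserving_equiv_real_prod.setLIntegral_comp_preimage_emb
        Complex.measurableEquivRealProd.measurableEmbedding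
        (fun p => ENNReal.ofReal (Complex.normSq (deriv F
          (Complex.measurableEquivRealProd.symm p))))]
      apply lintegral_congr
      intro z
      rw [MeasurableEquiv.symm_apply_apply]
    have hmsble : Measurable (fun p : ℝ × ℝ =>
        ENNReal.ofReal (Complex.normSq (deriv F (Complex.measurableEquivRealProd.symm p)))) := by
      have h1 : Measurable (deriv F) := measurable_deriv F
      exact ENNReal.measurable_ofReal.comp (Complex.continuous_normSq.measurable.comp
        (h1.comp Complex.measurableEquivRealProd.symm.measurable))
    have hiter : ∫⁻ p in Set.Ioo a' b' ×ˢ Set.Ico 0 (2 * Real.pi),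
        ENNReal.ofReal (Complex.normSq (deriv F (Complex.measurableEquivRealProd.symm p)))
          ∂(volume : Measure (ℝ × ℝ))
        = ∫⁻ x in Set.Ioo a' b', ∫⁻ y in Set.Ico 0 (2 * Real.pi),
            ENNReal.ofReal (Complex.normSq (deriv F
              (Complex.measurableEquivRealProd.symm (x, y)))) := by
      rw [MeasureTheory.Measure.volume_eq_prod, ← MeasureTheory.Measure.prod_restrict]
      exact MeasureTheory.lintegral_prod _ hmsble.aemeasurable
    -- pointwise lower bound for each x
    have hpoint : ∀ x ∈ Set.Ioo a' b',
        ENNReal.ofReal (Complex.normSq Λ / (2 * Real.pi))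
          ≤ ∫⁻ y in Set.Ico 0 (2 * Real.pi),
            ENNReal.ofReal (Complex.normSq (deriv F
              (Complex.measurableEquivRealProd.symm (x, y)))) := by
      intro x hx
      have hax : a < x := lt_trans haa hx.1
      have hxb : x < b := lt_trans hx.2 hbb
      have hsymm : ∀ y : ℝ, Complex.measurableEquivRealProd.symm (x, y)
          = (x:ℂ) + y * Complex.I := by
        intro y
        rw [Complex.measurableEquivRealProd_symm_apply]
        exact Complex.mk_eq_add_mul_I x y
      have hvert := bers_vertical Λ F hderiv hdc hper hax hxb
      -- continuity of integrand on the segment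
      have hlc : Continuous (fun y : ℝ => (x:ℂ) + (y:ℂ) * Complex.I) :=
        continuous_const.add (Complex.continuous_ofReal.mul continuous_const)
      have hc2 : ContinuousOn (fun y : ℝ =>
          Complex.normSq (deriv F ((x:ℂ) + y * Complex.I))) (Set.Icc 0 (2 * Real.pi)) := by
        apply Complex.continuous_normSq.comp_continuousOn
        exact hdc.comp hlc.continuousOn (fun y _ => by
          constructor <;> simp <;> [exact hax; exact hxb])
      have hint : IntegrableOn (fun y : ℝ =>
          Complex.normSq (deriv F ((x:ℂ) + y * Complex.I))) (Set.Ioc 0 (2 * Real.pi)) := by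
        exact (hc2.integrableOn_compact isCompact_Icc).mono_set Set.Ioc_subset_Icc_self
      have heq1 : ENNReal.ofReal (∫ y in (0:ℝ)..(2 * Real.pi),
          Complex.normSq (deriv F ((x:ℂ) + y * Complex.I)))
          = ∫⁻ y in Set.Ioc 0 (2 * Real.pi),
            ENNReal.ofReal (Complex.normSq (deriv F ((x:ℂ) + y * Complex.I))) := by
        rw [intervalIntegral.integral_of_le hpi.le]
        exact ofReal_integral_eq_lintegral_ofReal hint
          (Filter.Eventually.of_forall fun y => Complex.normSq_nonneg _)
      have heq2 : (volume : Measure ℝ).restrict (Set.Ico 0 (2 * Real.pi))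
          = (volume : Measure ℝ).restrict (Set.Ioc 0 (2 * Real.pi)) :=
        Measure.restrict_congr_set Ico_ae_eq_Ioc
      calc ENNReal.ofReal (Complex.normSq Λ / (2 * Real.pi))
          ≤ ENNReal.ofReal (∫ y in (0:ℝ)..(2 * Real.pi),
              Complex.normSq (deriv F ((x:ℂ) + y * Complex.I))) := by
            apply ENNReal.ofReal_le_ofReal
            rw [div_le_iff₀ hpi]
            linarith [hvert]
        _ = ∫⁻ y in Set.Ioc 0 (2 * Real.pi),
              ENNReal.ofReal (Complex.normSq (deriv F ((x:ℂ) + y * Complex.I))) := heq1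
        _ = ∫⁻ y in Set.Ico 0 (2 * Real.pi),
              ENNReal.ofReal (Complex.normSq (deriv F ((x:ℂ) + y * Complex.I))) := by
            rw [heq2]
        _ = ∫⁻ y in Set.Ico 0 (2 * Real.pi),
              ENNReal.ofReal (Complex.normSq (deriv F
                (Complex.measurableEquivRealProd.symm (x, y)))) := by
            apply lintegral_congr
            intro y
            rw [hsymm]
    -- put it together
    have hlower : ENNReal.ofReal (b' - a') * ENNReal.ofReal (Complex.normSq Λ / (2 * Real.pi))
        ≤ volume (F '' S) := by
      rw [← hchange, hprod, hiter]
      calc ENNReal.ofReal (b' - a') * ENNReal.ofReal (Complex.normSq Λ / (2 * Real.pi))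
          = ∫⁻ _x in Set.Ioo a' b',
              ENNReal.ofReal (Complex.normSq Λ / (2 * Real.pi)) := by
            rw [setLIntegral_const, Real.volume_Ioo, mul_comm]
        _ ≤ _ := setLIntegral_mono' measurableSet_Ioo hpoint
    have hcomb : ENNReal.ofReal ((b' - a') * (Complex.normSq Λ / (2 * Real.pi)))
        ≤ ENNReal.ofReal (2 * Real.pi * Λ.re) := by
      rw [ENNReal.ofReal_mul (by linarith : (0:ℝ) ≤ b' - a')]
      exact le_trans hlower hpack
    have hreal : (b' - a') * (Complex.normSq Λ / (2 * Real.pi)) ≤ 2 * Real.pi * Λ.re :=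
      (ENNReal.ofReal_le_ofReal_iff (by positivity)).mp hcomb
    rw [mul_div_assoc'] at hreal
    rw [div_le_iff₀ hpi] at hreal
    linarith [hreal]
  -- limiting argument
  have hlimit : (b - a) * Complex.normSq Λ ≤ (2 * Real.pi) * (2 * Real.pi * Λ.re) := by
    apply le_of_forall_pos_le_add
    intro ε hε
    set δ : ℝ := min (ε / (2 * Complex.normSq Λ)) ((b - a) / 4) with hδdef
    have hδpos : 0 < δ := lt_min (by positivity) (by linarith)
    have hδ1 : δ ≤ ε / (2 * Complex.normSq Λ) := min_le_left _ _
    have hδ2 : δ ≤ (b - a) / 4 := min_le_right _ _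
    have hm := main (a + δ) (b - δ) (by linarith) (by linarith) (by linarith)
    have hδε : 2 * δ * Complex.normSq Λ ≤ ε := by
      have h := (le_div_iff₀ (by positivity : (0:ℝ) < 2 * Complex.normSq Λ)).mp hδ1
      nlinarith [h]
    nlinarith [hm, hnsq, hδpos]
  -- final algebra
  have hR : (0:ℝ) < R := lt_trans hr hrR
  have hlog : Real.log (R / r) = b - a := Real.log_div hR.ne' hr.ne'
  rw [hlog, Complex.inv_re]
  rw [div_le_iff₀ hpi]
  calc b - a ≤ (2 * Real.pi * (2 * Real.pi * Λ.re)) / Complex.normSq Λ :=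
        (le_div_iff₀ hnsq).mpr hlimit
    _ = 2 * Real.pi * (Λ.re / Complex.normSq Λ) * (2 * Real.pi) := by
        field_simp
end

section
/- Let φ: S → ℂ be a univalent holomorphic map on a horizontal strip S of height h containing ℝ, commuting with T₁(z) = z+1 and fixing 0. Then there exists a constant K = K(h) depending only on h (not on φ) such that |φ(w) − w| < K for all w in the substrip of height h/2 symmetric about ℝ. -/
open Complex Metric Set intervalIntegral MeasureTheory



/-- Radial primitive on a ball. -/
lemma exists_primitive_ball {c : ℂ} {R : ℝ} {q : ℂ → ℂ} (hq : DifferentiableOn ℂ q (ball c R)) :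
    ∃ F : ℂ → ℂ, F c = 0 ∧ ∀ z ∈ ball c R, HasDerivAt F (q z) z := by
  have hco : IsOpen (ball c R) := isOpen_ball
  have hqa : AnalyticOnNhd ℂ q (ball c R) := hq.analyticOnNhd hco
  have hq' : ContinuousOn (deriv q) (ball c R) := (hqa.deriv).continuousOn
  have hqc : ContinuousOn q (ball c R) := hq.continuousOn
  refine ⟨fun z => (z - c) * ∫ t in (0:ℝ)..1, q (c + t • (z - c)), by simp, ?_⟩
  intro z₁ hz₁
  -- membership of radial points
  have hmem : ∀ z ∈ ball c R, ∀ t ∈ Set.Icc (0:ℝ) 1, c + t • (z - c) ∈ ball c R := by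
    intro z hz t ht
    simp only [mem_ball, dist_eq_norm] at hz ⊢
    have : c + t • (z - c) - c = t • (z - c) := by module
    rw [this, norm_smul]
    calc ‖t‖ * ‖z - c‖ ≤ 1 * ‖z - c‖ := by
          apply mul_le_mul_of_nonneg_right _ (norm_nonneg _)
          rw [Real.norm_eq_abs, _root_.abs_of_nonneg ht.1]; exact ht.2
      _ < R := by simpa using hz
  -- choose δ
  obtain ⟨ε, hε, hball⟩ : ∃ ε > 0, ball z₁ ε ⊆ ball c R := by
    rcases Metric.isOpen_iff.1 hco z₁ hz₁ with ⟨ε, hε, hb⟩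
    exact ⟨ε, hε, hb⟩
  set δ := ε / 2 with hδdef
  have hδ : 0 < δ := by positivity
  have hδball : closedBall z₁ δ ⊆ ball c R := by
    refine subset_trans ?_ hball
    intro x hx
    have : δ < ε := by rw [hδdef]; linarith
    exact lt_of_le_of_lt (mem_closedBall.1 hx) this
  -- compact set of radial points
  set p : ℝ × ℂ → ℂ := fun pr => c + pr.1 • (pr.2 - c) with hpdef
  have hpcont : Continuous p := by fun_prop
  set K : Set ℂ := p '' (Set.Icc (0:ℝ) 1 ×ˢ closedBall z₁ δ) with hKdef
  have hKcomp : IsCompact K := ((isCompact_Icc).prod (isCompact_closedBall _ _)).image hpcont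
  have hKsub : K ⊆ ball c R := by
    rintro x ⟨⟨t, z⟩, ⟨ht, hz⟩, rfl⟩
    exact hmem z (hδball hz) t ht
  obtain ⟨B, hB⟩ : ∃ B, ∀ x ∈ K, ‖deriv q x‖ ≤ B :=
    hKcomp.exists_bound_of_continuousOn (hq'.mono hKsub)
  -- derivative under the integral sign
  have hmeas : ∀ z ∈ ball c R, AEStronglyMeasurable (fun t : ℝ => q (c + t • (z - c)))
      (volume.restrict (Set.uIoc (0:ℝ) 1)) := by
    intro z hz
    apply ContinuousOn.aestronglyMeasurable _ measurableSet_uIoc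
    intro t ht
    have ht' : t ∈ Set.Icc (0:ℝ) 1 := by
      rw [Set.uIoc_of_le (by norm_num : (0:ℝ) ≤ 1)] at ht
      exact ⟨le_of_lt ht.1, ht.2⟩
    have hcont : ContinuousWithinAt (fun t : ℝ => c + t • (z - c)) (Set.uIoc (0:ℝ) 1) t :=
      (by fun_prop : Continuous fun t : ℝ => c + t • (z - c)).continuousWithinAt
    exact ContinuousWithinAt.comp (hqc _ (hmem z hz t ht')) hcont
      (fun u hu => by
        rw [Set.uIoc_of_le (by norm_num : (0:ℝ) ≤ 1)] at hu
        exact hmem z hz u ⟨le_of_lt hu.1, hu.2⟩)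
  have hint : ∀ z ∈ ball c R, IntervalIntegrable (fun t : ℝ => q (c + t • (z - c)))
      volume 0 1 := by
    intro z hz
    apply ContinuousOn.intervalIntegrable
    intro t ht
    rw [Set.uIcc_of_le (by norm_num : (0:ℝ) ≤ 1)] at ht
    have hcont : ContinuousWithinAt (fun t : ℝ => c + t • (z - c)) (Set.uIcc (0:ℝ) 1) t :=
      (by fun_prop : Continuous fun t : ℝ => c + t • (z - c)).continuousWithinAt
    exact ContinuousWithinAt.comp (hqc _ (hmem z hz t ht)) hcont
      (fun u hu => by
        rw [Set.uIcc_of_le (by norm_num : (0:ℝ) ≤ 1)] at hu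
        exact hmem z hz u hu)
  have key := intervalIntegral.hasDerivAt_integral_of_dominated_loc_of_deriv_le
    (F := fun z t => q (c + t • (z - c)))
    (F' := fun z t => (t : ℂ) * deriv q (c + t • (z - c)))
    (x₀ := z₁) (μ := volume) (a := 0) (b := 1) (bound := fun _ => B) (Metric.ball_mem_nhds z₁ hδ)
    ?_ (hint z₁ hz₁) ?_ ?_ ?_ ?_
  case _ =>  -- main continuation
    have hG := key.2
    have hF := ((hasDerivAt_id z₁).sub_const c).mul hG
    -- FTC identity
    have hmemt : ∀ t ∈ Set.uIcc (0:ℝ) 1, c + t • (z₁ - c) ∈ ball c R := by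
      intro t ht
      rw [Set.uIcc_of_le (by norm_num : (0:ℝ) ≤ 1)] at ht
      exact hmem z₁ hz₁ t ht
    have hΦ : ∀ t ∈ Set.uIcc (0:ℝ) 1, HasDerivAt (fun s : ℝ => s • q (c + s • (z₁ - c)))
        (q (c + t • (z₁ - c)) + t • ((z₁ - c) • deriv q (c + t • (z₁ - c)))) t := by
      intro t ht
      have hp : HasDerivAt (fun s : ℝ => c + s • (z₁ - c)) (z₁ - c) t := by
        simpa using ((hasDerivAt_id t).smul_const (z₁ - c)).const_add c
      have hqd : HasDerivAt q (deriv q (c + t • (z₁ - c))) (c + t • (z₁ - c)) :=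
        (hq.differentiableAt (hco.mem_nhds (hmemt t ht))).hasDerivAt
      have hcomp : HasDerivAt (fun s : ℝ => q (c + s • (z₁ - c)))
          ((z₁ - c) • deriv q (c + t • (z₁ - c))) t := hqd.scomp t hp
      have := (hasDerivAt_id' t).smul hcomp
      exact this.congr_deriv (by simp [add_comm])
    have hcont1 : ContinuousOn (fun t : ℝ => q (c + t • (z₁ - c))) (Set.uIcc (0:ℝ) 1) := by
      intro t ht
      have hcont : ContinuousWithinAt (fun t : ℝ => c + t • (z₁ - c)) (Set.uIcc (0:ℝ) 1) t :=
        (by fun_prop : Continuous fun t : ℝ => c + t • (z₁ - c)).continuousWithinAt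
      exact ContinuousWithinAt.comp (hqc _ (hmemt t ht)) hcont (fun u hu => hmemt u hu)
    have hcont2 : ContinuousOn (fun t : ℝ => t • ((z₁ - c) • deriv q (c + t • (z₁ - c))))
        (Set.uIcc (0:ℝ) 1) := by
      apply ContinuousOn.smul continuousOn_id
      refine ContinuousOn.congr (f := (z₁ - c) • fun t : ℝ => deriv q (c + t • (z₁ - c)))
        (ContinuousOn.const_smul ?_ (z₁ - c)) (fun _ _ => rfl)
      exact ContinuousOn.comp hq'
        ((by fun_prop : Continuous fun t : ℝ => c + t • (z₁ - c)).continuousOn)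
        (fun u hu => hmemt u hu)
    have hint1 : IntervalIntegrable (fun t : ℝ => q (c + t • (z₁ - c))) volume 0 1 :=
      hcont1.intervalIntegrable
    have hint2 : IntervalIntegrable (fun t : ℝ => t • ((z₁ - c) • deriv q (c + t • (z₁ - c))))
        volume 0 1 := hcont2.intervalIntegrable
    have hFTC := intervalIntegral.integral_eq_sub_of_hasDerivAt hΦ (hint1.add hint2)
    have hval : (q z₁ : ℂ) = (∫ t in (0:ℝ)..1, q (c + t • (z₁ - c)))
        + (z₁ - c) * ∫ t in (0:ℝ)..1, (t : ℂ) * deriv q (c + t • (z₁ - c)) := by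
      have h1 : (1:ℝ) • q (c + (1:ℝ) • (z₁ - c)) - (0:ℝ) • q (c + (0:ℝ) • (z₁ - c)) = q z₁ := by
        simp
      rw [intervalIntegral.integral_add hint1 hint2] at hFTC
      rw [h1] at hFTC
      rw [← hFTC]
      congr 1
      rw [← intervalIntegral.integral_const_mul]
      apply intervalIntegral.integral_congr
      intro t ht
      push_cast [Complex.real_smul, smul_eq_mul]
      ring
    have hF' : HasDerivAt (fun z : ℂ => (z - c) * ∫ t in (0:ℝ)..1, q (c + t • (z - c)))
        (q z₁) z₁ := by
      convert hF using 1
      · rfl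
      · rfl
      · rfl
      rw [hval]; simp [id_eq]
    exact hF'
  case _ =>  -- hF_meas
    filter_upwards [hco.mem_nhds hz₁] with x hx using hmeas x hx
  case _ =>  -- hF'_meas
    apply ContinuousOn.aestronglyMeasurable _ measurableSet_uIoc
    apply ContinuousOn.mul (by fun_prop)
    exact ContinuousOn.comp hq'
      ((by fun_prop : Continuous fun t : ℝ => c + t • (z₁ - c)).continuousOn)
      (fun u hu => by
        rw [Set.uIoc_of_le (by norm_num : (0:ℝ) ≤ 1)] at hu
        exact hmem z₁ hz₁ u ⟨le_of_lt hu.1, hu.2⟩)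
  case _ =>  -- h_bound
    apply MeasureTheory.ae_of_all
    intro t ht x hx
    rw [Set.uIoc_of_le (by norm_num : (0:ℝ) ≤ 1)] at ht
    have ht' : t ∈ Set.Icc (0:ℝ) 1 := ⟨le_of_lt ht.1, ht.2⟩
    have hxK : c + t • (x - c) ∈ K := ⟨(t, x), ⟨ht', ball_subset_closedBall hx⟩, rfl⟩
    have hB0 : (0:ℝ) ≤ B := le_trans (norm_nonneg _) (hB _ hxK)
    rw [norm_mul]
    calc ‖(t:ℂ)‖ * ‖deriv q (c + t • (x - c))‖ ≤ 1 * B := by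
          apply mul_le_mul _ (hB _ hxK) (norm_nonneg _) zero_le_one
          rw [Complex.norm_real, Real.norm_eq_abs, _root_.abs_of_nonneg ht'.1]
          exact ht'.2
      _ = B := one_mul B
  case _ =>  -- bound_integrable
    exact intervalIntegrable_const
  case _ =>  -- h_diff
    apply MeasureTheory.ae_of_all
    intro t ht x hx
    rw [Set.uIoc_of_le (by norm_num : (0:ℝ) ≤ 1)] at ht
    have ht' : t ∈ Set.Icc (0:ℝ) 1 := ⟨le_of_lt ht.1, ht.2⟩
    have hxball : c + t • (x - c) ∈ ball c R := hmem x (hball (mem_ball.2 (by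
      have := mem_ball.1 hx; calc dist x z₁ < δ := this
        _ < ε := by rw [hδdef]; linarith))) t ht'
    have hqd : HasDerivAt q (deriv q (c + t • (x - c))) (c + t • (x - c)) :=
      (hq.differentiableAt (hco.mem_nhds hxball)).hasDerivAt
    have hinner : HasDerivAt (fun z : ℂ => c + t • (z - c)) ((t:ℂ)) x := by
      have := ((hasDerivAt_id x).sub_const c).const_smul (t:ℝ)
      simpa [Complex.real_smul] using this.const_add c
    exact (hqd.comp x hinner).congr_deriv (mul_comm _ _)

lemma exists_log_ball {c : ℂ} {R : ℝ} {v : ℂ → ℂ} (hv : DifferentiableOn ℂ v (ball c R))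
    (hvne : ∀ z ∈ ball c R, v z ≠ 0) (hc : v c = 1) (hR : 0 < R) :
    ∃ u : ℂ → ℂ, (∀ z ∈ ball c R, HasDerivAt u (deriv v z / v z) z) ∧
      ∀ z ∈ ball c R, Complex.exp (u z) = v z := by
  have hco : IsOpen (ball c R) := isOpen_ball
  have hq : DifferentiableOn ℂ (fun z => deriv v z / v z) (ball c R) := by
    apply DifferentiableOn.div
    · exact ((hv.analyticOnNhd hco).deriv).differentiableOn
    · exact hv
    · exact hvne
  obtain ⟨F, hFc, hF⟩ := exists_primitive_ball hq
  refine ⟨F, hF, ?_⟩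
  -- the function exp(-F) * v is constant
  have hgd : ∀ z ∈ ball c R, HasDerivAt (fun z => Complex.exp (-F z) * v z) 0 z := by
    intro z hz
    have hvz : HasDerivAt v (deriv v z) z := (hv.differentiableAt (hco.mem_nhds hz)).hasDerivAt
    have hFz : HasDerivAt F (deriv v z / v z) z := hF z hz
    have hexp : HasDerivAt (fun z => Complex.exp (-F z))
        (Complex.exp (-F z) * (-(deriv v z / v z))) z := by
      have := (hFz.neg).cexp
      simpa [mul_comm] using this
    have := hexp.mul hvz
    convert this using 1
    · rfl
    · rfl
    · rfl
    field_simp [hvne z hz]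
    ring
  have hconst : ∀ z ∈ ball c R, Complex.exp (-F z) * v z = 1 := by
    intro z hz
    have hcball : c ∈ ball c R := mem_ball_self hR
    have := Convex.norm_image_sub_le_of_norm_hasFDerivWithin_le
      (f := fun z => Complex.exp (-F z) * v z)
      (f' := fun _ => (0 : ℂ →L[ℂ] ℂ)) (C := 0)
      (fun x hx => ((hgd x hx).hasFDerivAt.hasFDerivWithinAt).congr_fderiv (by ext; simp))
      (fun x hx => by simp) (convex_ball c R) hcball hz
    have h0 : Complex.exp (-F z) * v z = Complex.exp (-F c) * v c := by
      rw [zero_mul] at this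
      exact sub_eq_zero.1 (norm_le_zero_iff.1 this)
    rw [h0, hFc, hc]; simp
  intro z hz
  have := hconst z hz
  have hne : Complex.exp (-F z) ≠ 0 := Complex.exp_ne_zero _
  rw [Complex.exp_neg] at this
  field_simp at this
  exact this.symm


/-- Quantitative open mapping: if `‖f'‖ ≤ 2‖f'(a)‖` on a ball, the image contains a
definite ball around `f a`. -/
lemma qom {a : ℂ} {ρ : ℝ} {f : ℂ → ℂ} (hρ : 0 < ρ) (hf : DifferentiableOn ℂ f (ball a ρ))
    (hbd : ∀ z ∈ ball a ρ, ‖deriv f z‖ ≤ 2 * ‖deriv f a‖) :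
    ball (f a) (‖deriv f a‖ * ρ / 64) ⊆ f '' (ball a ρ) := by
  set μ := ‖deriv f a‖ with hμdef
  rcases eq_or_lt_of_le (norm_nonneg (deriv f a)) with hμ0 | hμpos
  · have hz : μ * ρ / 64 = 0 := by rw [hμdef, ← hμ0]; ring
    rw [hz]; simp
  have hμ : 0 < μ := hμpos
  -- Lipschitz bound
  have hlip : ∀ z ∈ ball a ρ, ‖f z - f a‖ ≤ 2 * μ * ‖z - a‖ := by
    intro z hz
    exact Convex.norm_image_sub_le_of_norm_hasFDerivWithin_le
      (f' := fun z => ContinuousLinearMap.smulRight (1 : ℂ →L[ℂ] ℂ) (deriv f z))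
      (fun x hx => ((hf.differentiableAt
        (isOpen_ball.mem_nhds hx)).hasDerivAt).hasFDerivAt.hasFDerivWithinAt)
      (fun x hx => by
        rw [ContinuousLinearMap.norm_smulRight_apply, norm_one, one_mul]
        exact hbd x hx)
      (convex_ball a ρ) (mem_ball_self hρ) hz
  -- second dslope
  set g := dslope (dslope f a) a with hgdef
  have hg : DifferentiableOn ℂ g (ball a ρ) := by
    rw [hgdef]
    exact (differentiableOn_dslope (ball_mem_nhds a hρ)).2
      ((differentiableOn_dslope (ball_mem_nhds a hρ)).2 hf)
  have htay : ∀ z : ℂ, f z = f a + deriv f a * (z - a) + (z - a) ^ 2 * g z := by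
    intro z
    have h2 := sub_smul_dslope (dslope f a) a z
    rw [dslope_same, smul_eq_mul] at h2
    have h1 := sub_smul_dslope f a z
    rw [smul_eq_mul] at h1
    rw [hgdef]
    linear_combination (-1 : ℂ) * h1 - (z - a) * h2
  -- bound on g on closedBall a (ρ/2)
  have hgbd : ∀ z ∈ closedBall a (ρ / 2), ‖g z‖ ≤ 6 * μ / ρ := by
    have hfr : frontier (ball a (ρ / 2)) = sphere a (ρ / 2) :=
      frontier_ball a (by positivity : (0:ℝ) < ρ/2).ne'
    have hcl : closedBall a (ρ/2) ⊆ ball a ρ := closedBall_subset_ball (by linarith)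
    intro z hz
    apply Complex.norm_le_of_forall_mem_frontier_norm_le isBounded_ball
      ⟨hg.mono (ball_subset_ball (by linarith : ρ/2 ≤ ρ)), hg.continuousOn.mono (by
        rw [closure_ball a (by positivity : (0:ℝ) < ρ/2).ne']; exact hcl)⟩
    · intro x hx
      rw [hfr] at hx
      have hxd : ‖x - a‖ = ρ / 2 := by
        have := mem_sphere_iff_norm.1 hx; simpa using this
      have hxball : x ∈ ball a ρ := by
        rw [mem_ball, dist_eq_norm, hxd]; linarith
      have h1 : (x - a) ^ 2 * g x = f x - f a - deriv f a * (x - a) := by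
        rw [htay x]; ring
      have h2 : ‖(x - a) ^ 2 * g x‖ ≤ 2 * μ * (ρ/2) + μ * (ρ/2) := by
        rw [h1]
        calc ‖f x - f a - deriv f a * (x - a)‖ ≤ ‖f x - f a‖ + ‖deriv f a * (x - a)‖ :=
              norm_sub_le _ _
          _ ≤ 2 * μ * (ρ/2) + μ * (ρ/2) := by
              apply add_le_add
              · have := hlip x hxball; rw [hxd] at this; exact this
              · rw [norm_mul, hxd]
      rw [norm_mul, norm_pow, hxd] at h2
      have h4 : (‖g x‖ * ρ) * ρ ≤ (6 * μ) * ρ := by nlinarith [h2]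
      have h5 : ‖g x‖ * ρ ≤ 6 * μ := le_of_mul_le_mul_right h4 hρ
      rw [le_div_iff₀ hρ]; exact h5
    · rw [closure_ball a (by positivity : (0:ℝ) < ρ/2).ne']
      exact hz
  -- lower bound on the sphere of radius s = ρ/24
  set s := ρ / 24 with hsdef
  have hs : 0 < s := by positivity
  have hlow : ∀ z ∈ sphere a s, 2 * (μ * ρ / 64) ≤ ‖f z - f a‖ := by
    intro z hz
    have hzd : ‖z - a‖ = s := by have := mem_sphere_iff_norm.1 hz; simpa using this
    have hzcb : z ∈ closedBall a (ρ/2) := by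
      rw [mem_closedBall, dist_eq_norm, hzd, hsdef]; linarith
    have h1 : f z - f a = deriv f a * (z - a) + (z - a)^2 * g z := by rw [htay z]; ring
    have key : ‖deriv f a * (z - a)‖ ≤ ‖f z - f a‖ + ‖(z-a)^2 * g z‖ := by
      calc ‖deriv f a * (z - a)‖ = ‖(f z - f a) - (z-a)^2 * g z‖ := by
            congr 1; rw [h1]; ring
        _ ≤ ‖f z - f a‖ + ‖(z-a)^2 * g z‖ := norm_sub_le _ _
    have hA : ‖deriv f a * (z - a)‖ = μ * s := by rw [norm_mul, hzd, hμdef]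
    have hB : ‖(z-a)^2 * g z‖ ≤ s^2 * (6 * μ / ρ) := by
      rw [norm_mul, norm_pow, hzd]
      exact mul_le_mul_of_nonneg_left (hgbd z hzcb) (by positivity)
    rw [hA] at key
    have hs6 : s^2 * (6 * μ / ρ) = μ * ρ / 96 := by rw [hsdef]; field_simp; ring
    rw [hs6] at hB
    have hμs : μ * s = μ * ρ / 24 := by rw [hsdef]; ring
    linarith [key, hB]
  -- conclusion
  intro w hw
  rcases eq_or_ne w (f a) with rfl | hwne
  · exact ⟨a, mem_ball_self hρ, rfl⟩
  by_contra hno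
  have hne : ∀ z ∈ ball a ρ, f z ≠ w := by
    intro z hz hzw
    exact hno ⟨z, hz, hzw⟩
  set ε := μ * ρ / 64 with hεdef
  have hε : 0 < ε := by positivity
  have hscl : closedBall a s ⊆ ball a ρ := closedBall_subset_ball (by linarith)
  have hFd : DiffContOnCl ℂ (fun z => (f z - w)⁻¹) (ball a s) := by
    constructor
    · apply DifferentiableOn.inv
      · exact (hf.mono (ball_subset_ball (by linarith : s ≤ ρ))).sub_const w
      · intro x hx
        exact sub_ne_zero.2 (hne x (ball_subset_ball (by linarith : s ≤ ρ) hx))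
    · rw [closure_ball a hs.ne']
      apply ContinuousOn.inv₀
      · exact (hf.continuousOn.mono hscl).sub continuousOn_const
      · intro x hx
        exact sub_ne_zero.2 (hne x (hscl hx))
  have hbnd : ∀ x ∈ frontier (ball a s), ‖(f x - w)⁻¹‖ ≤ ε⁻¹ := by
    intro x hx
    rw [frontier_ball a hs.ne'] at hx
    have h1 : 2 * ε ≤ ‖f x - f a‖ := hlow x hx
    have h2 : ‖f a - w‖ < ε := by
      have := mem_ball.1 hw; rw [dist_comm, dist_eq_norm] at this; exact this
    have h3 : ε ≤ ‖f x - w‖ := by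
      calc ε = 2 * ε - ε := by ring
        _ ≤ ‖f x - f a‖ - ‖f a - w‖ := by linarith
        _ ≤ ‖(f x - f a) + (f a - w)‖ := by
            have h := norm_add_le ((f x - f a) + (f a - w)) (-(f a - w))
            rw [norm_neg] at h
            simp only [add_neg_cancel_right] at h
            linarith
        _ = ‖f x - w‖ := by congr 1; ring
    rw [norm_inv]
    exact inv_anti₀ hε h3
  have hmax := Complex.norm_le_of_forall_mem_frontier_norm_le isBounded_ball hFd hbnd
    (z := a) (by rw [closure_ball a hs.ne']; exact mem_closedBall_self hs.le)
  have hfa : 0 < ‖f a - w‖ := by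
    rw [norm_pos_iff]; exact sub_ne_zero.2 (Ne.symm hwne)
  have hfaε : ‖f a - w‖ < ε := by
    have := mem_ball.1 hw; rw [dist_comm, dist_eq_norm] at this; exact this
  rw [norm_inv] at hmax
  have : ε ≤ ‖f a - w‖ := by
    by_contra hc
    push_neg at hc
    have := inv_strictAnti₀ hfa hc
    linarith [hmax, this]
  linarith

/-- Bloch-type theorem: the image of a ball under a holomorphic map contains some ball of
radius comparable to `r * ‖f'(center)‖`. -/
lemma bloch {z₀ : ℂ} {r : ℝ} {f : ℂ → ℂ} (hr : 0 < r)
    (hf : DifferentiableOn ℂ f (ball z₀ r)) :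
    ∃ c : ℂ, ball c (r * ‖deriv f z₀‖ / 256) ⊆ f '' (ball z₀ r) := by
  rcases eq_or_lt_of_le (norm_nonneg (deriv f z₀)) with hμ0 | hμpos
  · refine ⟨f z₀, ?_⟩
    rw [show r * ‖deriv f z₀‖ / 256 = 0 by rw [← hμ0]; ring]
    simp
  set r' := r / 2 with hr'def
  have hr' : 0 < r' := by positivity
  have hcb : closedBall z₀ r' ⊆ ball z₀ r := closedBall_subset_ball (by rw [hr'def]; linarith)
  -- continuity of deriv f
  have hdc : ContinuousOn (deriv f) (ball z₀ r) := ((hf.analyticOnNhd isOpen_ball).deriv).continuousOn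
  -- maximize (r' - dist z z₀) * ‖deriv f z‖ over closedBall z₀ r'
  have hm : ContinuousOn (fun z => (r' - dist z z₀) * ‖deriv f z‖) (closedBall z₀ r') := by
    apply ContinuousOn.mul
    · exact (continuous_const.sub (continuous_id.dist continuous_const)).continuousOn
    · exact (hdc.mono hcb).norm
  obtain ⟨a, haball, hmax⟩ := (isCompact_closedBall z₀ r').exists_isMaxOn
    ⟨z₀, mem_closedBall_self hr'.le⟩ hm
  have hmax' : ∀ z ∈ closedBall z₀ r', (r' - dist z z₀) * ‖deriv f z‖ ≤
      (r' - dist a z₀) * ‖deriv f a‖ := fun z hz => hmax hz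
  have hm0 : r' * ‖deriv f z₀‖ ≤ (r' - dist a z₀) * ‖deriv f a‖ := by
    have := hmax' z₀ (mem_closedBall_self hr'.le)
    simpa using this
  set t := r' - dist a z₀ with htdef
  have ht : 0 < t := by
    by_contra hc
    push_neg at hc
    have : r' * ‖deriv f z₀‖ ≤ 0 := le_trans hm0 (mul_nonpos_of_nonpos_of_nonneg hc (norm_nonneg _))
    nlinarith [hμpos, hr']
  set ρ := t / 2 with hρdef
  have hρ : 0 < ρ := by positivity
  have hsub : ball a ρ ⊆ closedBall z₀ r' := by
    intro z hz
    rw [mem_closedBall]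
    calc dist z z₀ ≤ dist z a + dist a z₀ := dist_triangle _ _ _
      _ ≤ ρ + (r' - t) := add_le_add (le_of_lt (mem_ball.1 hz)) (by rw [htdef]; linarith)
      _ ≤ r' := by rw [hρdef]; linarith
  have hsub2 : ball a ρ ⊆ ball z₀ r := fun z hz => hcb (hsub hz)
  have hbd2 : ∀ z ∈ ball a ρ, ‖deriv f z‖ ≤ 2 * ‖deriv f a‖ := by
    intro z hz
    have hzcb := hsub hz
    have h1 := hmax' z hzcb
    have h2 : ρ ≤ r' - dist z z₀ := by
      have : dist z z₀ ≤ r' - ρ := by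
        calc dist z z₀ ≤ dist z a + dist a z₀ := dist_triangle _ _ _
          _ ≤ ρ + (r' - t) := add_le_add (le_of_lt (mem_ball.1 hz)) (by rw [htdef]; linarith)
          _ = r' - ρ := by rw [hρdef]; ring
      linarith
    -- (r' - dist z z₀) ‖f' z‖ ≤ t ‖f' a‖ and r' - dist z z₀ ≥ t/2
    have h3 : ρ * ‖deriv f z‖ ≤ t * ‖deriv f a‖ := by
      calc ρ * ‖deriv f z‖ ≤ (r' - dist z z₀) * ‖deriv f z‖ :=
            mul_le_mul_of_nonneg_right h2 (norm_nonneg _)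
        _ ≤ t * ‖deriv f a‖ := h1
    rw [hρdef] at h3
    nlinarith [h3, ht, norm_nonneg (deriv f z)]
  have hqom := qom hρ (hf.mono hsub2) hbd2
  refine ⟨f a, subset_trans ?_ (subset_trans hqom (Set.image_mono hsub2))⟩
  apply ball_subset_ball
  -- r ‖f' z₀‖ / 256 ≤ ‖f' a‖ ρ / 64, since ‖f' a‖ t ≥ r' ‖f' z₀‖ = (r/2)‖f' z₀‖
  have : r' * ‖deriv f z₀‖ ≤ t * ‖deriv f a‖ := hm0
  rw [hr'def] at this
  rw [hρdef]
  nlinarith [this]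

/-- Weak Koebe: for an injective holomorphic map on a ball, any omitted value is at distance
at least `r ‖f'(center)‖ / 1024` from the center value. -/
lemma weak_koebe {z₀ ω : ℂ} {r : ℝ} {f : ℂ → ℂ} (hr : 0 < r)
    (hf : DifferentiableOn ℂ f (ball z₀ r)) (hinj : Set.InjOn f (ball z₀ r))
    (hω : ∀ z ∈ ball z₀ r, f z ≠ ω) :
    r * ‖deriv f z₀‖ ≤ 1024 * ‖ω - f z₀‖ := by
  have hz₀ : z₀ ∈ ball z₀ r := mem_ball_self hr
  set ω' := ω - f z₀ with hω'def
  have hω' : ω' ≠ 0 := sub_ne_zero.2 (Ne.symm (hω z₀ hz₀))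
  set v : ℂ → ℂ := fun z => 1 - (f z - f z₀) / ω' with hvdef
  have hvd : DifferentiableOn ℂ v (ball z₀ r) := by
    apply DifferentiableOn.const_sub
    exact (hf.sub_const (f z₀)).div_const ω'
  have hvne : ∀ z ∈ ball z₀ r, v z ≠ 0 := by
    intro z hz hv0
    apply hω z hz
    rw [hvdef] at hv0
    simp only [sub_eq_zero] at hv0
    field_simp at hv0
    rw [hω'def] at hv0
    linear_combination -hv0
  have hvc : v z₀ = 1 := by rw [hvdef]; simp
  obtain ⟨u, hud, huv⟩ := exists_log_ball hvd hvne hvc hr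
  -- v is injective on the ball
  have hvinj : Set.InjOn v (ball z₀ r) := by
    intro x hx y hy hxy
    apply hinj hx hy
    rw [hvdef] at hxy
    simp only at hxy
    have : (f x - f z₀) / ω' = (f y - f z₀) / ω' := by linear_combination -hxy
    field_simp at this
    linear_combination this
  -- u differentiable
  have hudiff : DifferentiableOn ℂ u (ball z₀ r) :=
    fun z hz => ((hud z hz).differentiableAt).differentiableWithinAt
  -- derivative of u at z₀
  have hderiv_u : deriv u z₀ = deriv v z₀ := by
    have h := (hud z₀ hz₀).deriv
    rw [h, hvc]; simp
  -- Bloch ball in the image of u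
  obtain ⟨c, hc⟩ := bloch hr hudiff
  -- image of u contains no two points differing by 2πi
  have hpi4 : Real.pi < 4 := by
    have := Real.pi_lt_d2; linarith
  have hR0 : r * ‖deriv u z₀‖ / 256 ≤ 4 := by
    by_contra hcon
    push_neg at hcon
    have hc1 : c - Real.pi * Complex.I ∈ ball c (r * ‖deriv u z₀‖ / 256) := by
      rw [mem_ball, dist_eq_norm]
      have : ‖(c - Real.pi * Complex.I) - c‖ = Real.pi := by
        rw [show (c - Real.pi * Complex.I) - c = -(Real.pi * Complex.I) by ring]
        rw [norm_neg, norm_mul, Complex.norm_I, mul_one, Complex.norm_real,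
          Real.norm_eq_abs, abs_of_pos Real.pi_pos]
      rw [this]; linarith
    have hc2 : c + Real.pi * Complex.I ∈ ball c (r * ‖deriv u z₀‖ / 256) := by
      rw [mem_ball, dist_eq_norm]
      have : ‖(c + Real.pi * Complex.I) - c‖ = Real.pi := by
        rw [show (c + Real.pi * Complex.I) - c = Real.pi * Complex.I by ring]
        rw [norm_mul, Complex.norm_I, mul_one, Complex.norm_real,
          Real.norm_eq_abs, abs_of_pos Real.pi_pos]
      rw [this]; linarith
    obtain ⟨x, hxball, hxu⟩ := hc hc1
    obtain ⟨y, hyball, hyu⟩ := hc hc2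
    have hexy : u y = u x + 2 * Real.pi * Complex.I := by
      rw [hxu, hyu]; push_cast; ring
    have hvxy : v y = v x := by
      rw [← huv x hxball, ← huv y hyball, hexy, Complex.exp_add,
        Complex.exp_two_pi_mul_I, mul_one]
    have := hvinj hyball hxball hvxy
    rw [this] at hexy
    have : (2 : ℂ) * Real.pi * Complex.I = 0 := by linear_combination -hexy
    simp [Complex.ext_iff, Real.pi_ne_zero] at this
  -- conclude
  have hdu : ‖deriv u z₀‖ = ‖deriv f z₀‖ / ‖ω'‖ := by
    rw [hderiv_u]
    have hvz : HasDerivAt v (-(deriv f z₀ / ω')) z₀ := by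
      have hfz : HasDerivAt f (deriv f z₀) z₀ :=
        (hf.differentiableAt (isOpen_ball.mem_nhds hz₀)).hasDerivAt
      have := ((hfz.sub_const (f z₀)).div_const ω').const_sub 1
      exact this
    rw [hvz.deriv, norm_neg, norm_div]
  rw [hdu] at hR0
  have hω'pos : 0 < ‖ω'‖ := norm_pos_iff.2 hω'
  have h1 : r * (‖deriv f z₀‖ / ‖ω'‖) ≤ 1024 := by linarith
  have h3 := mul_le_mul_of_nonneg_right h1 hω'pos.le
  have h4 : r * (‖deriv f z₀‖ / ‖ω'‖) * ‖ω'‖ = r * ‖deriv f z₀‖ := by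
    rw [mul_assoc, div_mul_cancel₀ _ (ne_of_gt hω'pos)]
  rw [h4] at h3
  exact h3


/-- Uniform bound `|φ(w) − w| < K(h)` for univalent maps of a strip of height `h`
commuting with `z ↦ z+1` and fixing `0`, on the middle substrip of height `h/2`. -/
theorem stmt13 (h : ℝ) (hh : 0 < h) :
    ∃ K : ℝ, 0 < K ∧
      ∀ φ : ℂ → ℂ,
        DifferentiableOn ℂ φ {z : ℂ | |z.im| < h / 2} →
        Set.InjOn φ {z : ℂ | |z.im| < h / 2} →
        (∀ z : ℂ, |z.im| < h / 2 → φ (z + 1) = φ z + 1) →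
        φ 0 = 0 →
        ∀ w : ℂ, |w.im| < h / 4 → ‖φ w - w‖ < K := by
  set r : ℝ := h / 4 with hrdef
  have hr : 0 < r := by positivity
  set C₁ : ℝ := r + 1 + h / 4 with hC₁def
  set L₀ : ℝ := 1 / 2 + h / 4 with hL₀def
  have hL₀ : 0 < L₀ := by positivity
  set Kg : ℝ := L₀ * (1024 / r) with hKgdef
  have hKg : 0 < Kg := by positivity
  set εg : ℝ := L₀ * (1 + (1024 / r) * C₁) with hεgdef
  refine ⟨|gronwallBound 0 Kg εg 1| + 1, by positivity, ?_⟩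
  intro φ hφd hφinj hφcomm hφ0 w hw
  set S : Set ℂ := {z : ℂ | |z.im| < h / 2} with hSdef
  have hSopen : IsOpen S := isOpen_lt (Complex.continuous_im.abs) continuous_const
  -- integer translation
  have hint : ∀ n : ℤ, ∀ z : ℂ, |z.im| < h / 2 → φ (z + n) = φ z + n := by
    intro n
    induction n using Int.induction_on with
    | zero => intro z hz; simp
    | succ k ih =>
      intro z hz
      have hzk : |(z + (k:ℂ)).im| < h / 2 := by
        simpa using hz
      have h1 : φ ((z + (k:ℂ)) + 1) = φ (z + (k:ℂ)) + 1 := hφcomm _ hzk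
      have h2 : φ (z + (k:ℂ)) = φ z + k := ih z hz
      push_cast
      rw [show z + ((k:ℂ) + 1) = (z + (k:ℂ)) + 1 by ring, h1, h2]
      ring
    | pred k ih =>
      intro z hz
      have hzk : |(z + (-(k:ℂ) - 1)).im| < h / 2 := by
        have : (z + (-(k:ℂ) - 1)).im = z.im := by simp
        rw [this]; exact hz
      have h1 : φ ((z + (-(k:ℂ) - 1)) + 1) = φ (z + (-(k:ℂ) - 1)) + 1 := hφcomm _ hzk
      have h2 : φ (z + (-(k:ℂ))) = φ z + (-(k:ℂ)) := by
        have := ih z hz; push_cast at this ⊢; convert this using 2 <;> ring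
      push_cast at h1 h2 ⊢
      have h3 : (z + (-(k:ℂ) - 1)) + 1 = z + (-(k:ℂ)) := by ring
      rw [h3, h2] at h1
      linear_combination -h1
  have hfix : ∀ n : ℤ, φ (n : ℂ) = n := by
    intro n
    have := hint n 0 (by simpa using (by positivity : (0:ℝ) < h/2))
    simpa [hφ0] using this
  -- derivative bound on the substrip
  have hderiv : ∀ z : ℂ, |z.im| < h / 4 → r * ‖deriv φ z‖ ≤ 1024 * (‖φ z - z‖ + C₁) := by
    intro z hz
    have hball : ball z r ⊆ S := by
      intro x hx
      rw [hSdef, Set.mem_setOf_eq]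
      have h1 : |x.im - z.im| ≤ ‖x - z‖ := by
        have := Complex.abs_im_le_norm (x - z)
        simpa [Complex.sub_im] using this
      have h2 : ‖x - z‖ < r := by rwa [mem_ball, dist_eq_norm] at hx
      calc |x.im| ≤ |z.im| + |x.im - z.im| := by
            have := abs_sub_abs_le_abs_sub x.im z.im
            have h3 := abs_add_le z.im (x.im - z.im)
            calc |x.im| = |z.im + (x.im - z.im)| := by ring_nf
              _ ≤ |z.im| + |x.im - z.im| := h3
        _ < h/4 + r := by linarith
        _ = h/2 := by rw [hrdef]; ring
    set m' : ℤ := ⌈z.re + r⌉ with hm'def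
    have hm'1 : z.re + r ≤ (m' : ℝ) := Int.le_ceil _
    have hm'2 : (m' : ℝ) < z.re + r + 1 := Int.ceil_lt_add_one _
    have hω : ∀ x ∈ ball z r, φ x ≠ (m' : ℂ) := by
      intro x hx hxe
      have hxS : x ∈ S := hball hx
      have hm'S : (m' : ℂ) ∈ S := by
        rw [hSdef, Set.mem_setOf_eq]
        simp only [Complex.intCast_im, abs_zero]
        positivity
      have hxm : x = (m' : ℂ) := hφinj hxS hm'S (by rw [hxe, hfix m'])
      have h2 : ‖x - z‖ < r := by rwa [mem_ball, dist_eq_norm] at hx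
      have h3 : (x - z).re = (m' : ℝ) - z.re := by rw [hxm]; simp
      have h4 : (x - z).re ≤ ‖x - z‖ := by
        have := Complex.abs_re_le_norm (x - z)
        calc (x - z).re ≤ |(x - z).re| := le_abs_self _
          _ ≤ ‖x - z‖ := by simpa using this
      rw [h3] at h4
      linarith
    have hwk := weak_koebe hr (hφd.mono hball) (hφinj.mono hball) hω
    have hub : ‖(m' : ℂ) - φ z‖ ≤ ‖φ z - z‖ + C₁ := by
      calc ‖(m' : ℂ) - φ z‖ ≤ ‖(m' : ℂ) - z‖ + ‖z - φ z‖ := by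
            have := norm_add_le ((m' : ℂ) - z) (z - φ z)
            simpa [sub_add_sub_cancel] using this
        _ ≤ (r + 1 + h/4) + ‖φ z - z‖ := by
            apply add_le_add
            · have h5 : ((m' : ℂ) - z).re = (m' : ℝ) - z.re := by simp
              have h6 : ((m' : ℂ) - z).im = -z.im := by simp
              calc ‖(m' : ℂ) - z‖ ≤ |((m' : ℂ) - z).re| + |((m' : ℂ) - z).im| := by
                    simpa using Complex.norm_le_abs_re_add_abs_im ((m' : ℂ) - z)
                _ ≤ (r + 1) + h/4 := by
                    rw [h5, h6, abs_neg]
                    apply add_le_add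
                    · rw [_root_.abs_of_nonneg (by linarith)]
                      linarith
                    · linarith
                _ = r + 1 + h/4 := by ring
            · rw [norm_sub_rev]
        _ = ‖φ z - z‖ + C₁ := by rw [hC₁def]; ring
    calc r * ‖deriv φ z‖ ≤ 1024 * ‖(m' : ℂ) - φ z‖ := hwk
      _ ≤ 1024 * (‖φ z - z‖ + C₁) := by linarith
  -- Grönwall along the segment from the nearest integer
  set m : ℤ := round w.re with hmdef
  have hm : |w.re - (m : ℝ)| ≤ 1/2 := abs_sub_round w.re
  set γ : ℝ → ℂ := fun t => (m : ℂ) + t • (w - (m : ℂ)) with hγdef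
  have hγim : ∀ t ∈ Set.Icc (0:ℝ) 1, |(γ t).im| < h / 4 := by
    intro t ht
    have h1 : (γ t).im = t * w.im := by
      rw [hγdef]; simp [Complex.add_im, Complex.smul_im]
    rw [h1, abs_mul]
    calc |t| * |w.im| ≤ 1 * |w.im| := by
          apply mul_le_mul_of_nonneg_right _ (abs_nonneg _)
          rw [_root_.abs_of_nonneg ht.1]; exact ht.2
      _ = |w.im| := one_mul _
      _ < h / 4 := hw
  have hγS : ∀ t ∈ Set.Icc (0:ℝ) 1, γ t ∈ S := by
    intro t ht
    rw [hSdef, Set.mem_setOf_eq]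
    calc |(γ t).im| < h/4 := hγim t ht
      _ ≤ h/2 := by linarith
  have hL : ‖w - (m : ℂ)‖ ≤ L₀ := by
    calc ‖w - (m : ℂ)‖ ≤ |(w - (m : ℂ)).re| + |(w - (m : ℂ)).im| := by
          simpa using Complex.norm_le_abs_re_add_abs_im (w - (m : ℂ))
      _ ≤ 1/2 + h/4 := by
          apply add_le_add
          · simpa using hm
          · have : (w - (m : ℂ)).im = w.im := by simp
            rw [this]; linarith
      _ = L₀ := by rw [hL₀def]
  set F : ℝ → ℂ := fun t => φ (γ t) - γ t with hFdef
  have hFd : ∀ t ∈ Set.Icc (0:ℝ) 1,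
      HasDerivAt F ((w - (m : ℂ)) • (deriv φ (γ t) - 1)) t := by
    intro t ht
    have hφat : HasDerivAt φ (deriv φ (γ t)) (γ t) :=
      (hφd.differentiableAt (hSopen.mem_nhds (hγS t ht))).hasDerivAt
    have hγ' : HasDerivAt γ (w - (m : ℂ)) t := by
      rw [hγdef]
      simpa using ((hasDerivAt_id t).smul_const (w - (m : ℂ))).const_add ((m : ℂ))
    have hcomp := hφat.scomp t hγ'
    have := hcomp.sub hγ'
    refine this.congr_deriv ?_
    simp only [smul_eq_mul, smul_sub]
    ring
  have hF0 : ‖F 0‖ ≤ 0 := by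
    rw [hFdef]
    have : γ 0 = (m : ℂ) := by rw [hγdef]; simp
    simp only [this, hfix m, sub_self, norm_zero]
    exact le_refl 0
  have hbound : ∀ t ∈ Set.Ico (0:ℝ) 1,
      ‖(w - (m : ℂ)) • (deriv φ (γ t) - 1)‖ ≤ Kg * ‖F t‖ + εg := by
    intro t ht
    have ht' : t ∈ Set.Icc (0:ℝ) 1 := ⟨ht.1, ht.2.le⟩
    have hd := hderiv (γ t) (hγim t ht')
    have hd' : ‖deriv φ (γ t)‖ ≤ (1024 / r) * (‖φ (γ t) - γ t‖ + C₁) := by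
      rw [div_mul_eq_mul_div, le_div_iff₀ hr]
      calc ‖deriv φ (γ t)‖ * r = r * ‖deriv φ (γ t)‖ := by ring
        _ ≤ 1024 * (‖φ (γ t) - γ t‖ + C₁) := hd
    have hno : ‖deriv φ (γ t) - 1‖ ≤ ‖deriv φ (γ t)‖ + 1 := by
      calc ‖deriv φ (γ t) - 1‖ ≤ ‖deriv φ (γ t)‖ + ‖(1:ℂ)‖ := norm_sub_le _ _
        _ = ‖deriv φ (γ t)‖ + 1 := by rw [norm_one]
    have hC₁0 : 0 ≤ C₁ := by rw [hC₁def]; positivity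
    rw [norm_smul]
    calc ‖w - (m:ℂ)‖ * ‖deriv φ (γ t) - 1‖ ≤ L₀ * (‖deriv φ (γ t)‖ + 1) := by
          apply mul_le_mul hL hno (norm_nonneg _) hL₀.le
      _ ≤ L₀ * ((1024 / r) * (‖φ (γ t) - γ t‖ + C₁) + 1) := by
          apply mul_le_mul_of_nonneg_left _ hL₀.le
          linarith
      _ = Kg * ‖F t‖ + εg := by
          rw [hKgdef, hεgdef, hFdef]
          ring
  have hFc : ContinuousOn F (Set.Icc (0:ℝ) 1) :=
    fun t ht => ((hFd t ht).continuousAt).continuousWithinAt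
  have hgron := norm_le_gronwallBound_of_norm_deriv_right_le hFc
    (fun t ht => (hFd t (Set.Ico_subset_Icc_self ht)).hasDerivWithinAt)
    hF0 hbound 1 ⟨zero_le_one, le_refl 1⟩
  have hγ1 : γ 1 = w := by rw [hγdef]; simp
  have hF1 : F 1 = φ w - w := by rw [hFdef]; simp only [hγ1]
  rw [hF1] at hgron
  have : ‖φ w - w‖ = ‖φ w - w‖ := rfl
  rw [this]
  calc ‖φ w - w‖ ≤ gronwallBound 0 Kg εg (1 - 0) := hgron
    _ = gronwallBound 0 Kg εg 1 := by norm_num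
    _ ≤ |gronwallBound 0 Kg εg 1| := le_abs_self _
    _ < |gronwallBound 0 Kg εg 1| + 1 := by linarith
end
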